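/- Let l ≥ 1 be an integer, m ∈ {l−1, l, l+1}, and λ ∈ ℂ with Re λ ≥ 0. Define the sequence (x_n) by x₀ = 1, x₁ = A₀, and x_{n+1} = A_n x_n + B_n x_{n−1} for n ≥ 1, with the coefficients A_n, B_n as in the context. Then there exists N such that x_n ≠ 0 for all n ≥ N, and the limit lim_{n→∞} x_{n+1}/x_n exists and belongs to {1/2, 1}. -/

import Mathlib

/-- The coefficient A_n of the Heun ratio recurrence. -/
noncomputable def Acoef (l m : ℕ) (lam : ℂ) (n : ℕ) : ℂ :=
  if (l, m) = (1, 0) then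
    (lam^2 + 12*lam + 12*(n:ℂ)^2 + 8*(lam + 4)*(n:ℂ) + 12) / (4*(2*(n:ℂ)^2 + 9*(n:ℂ) + 7))
  else if (l, m) = (1, 1) then
    (lam^2 + 12*lam + 12*(n:ℂ)^2 + 8*lam*(n:ℂ) + 28*(n:ℂ) + 7) / (8*(n:ℂ)^2 + 36*(n:ℂ) + 28)
  else if (l, m) = (2, 1) then
    (lam^2 + 16*lam + 12*(n:ℂ)^2 + 8*lam*(n:ℂ) + 44*(n:ℂ) + 27) / (8*(n:ℂ)^2 + 44*(n:ℂ) + 36)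
  else
    (lam^2 + 4*lam + (l:ℂ)^2 + 2*(l:ℂ)*(2*lam + 6*(n:ℂ) + 1) + 2*(m:ℂ)^2 + 2*(m:ℂ)
        + 12*(n:ℂ)^2 + 8*lam*(n:ℂ) + 8*(n:ℂ) - 12)
      / (4*((n:ℂ) + 1)*(2*(l:ℂ) + 2*(n:ℂ) + 3))

/-- The coefficient B_n of the Heun ratio recurrence. -/
noncomputable def Bcoef (l m : ℕ) (lam : ℂ) (n : ℕ) : ℂ :=
  if (l, m) = (1, 0) then
    -((lam + 2*(n:ℂ)) * (lam + 2*(n:ℂ) + 2)) / (4*((n:ℂ) + 1)*(2*(n:ℂ) + 7))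
  else if (l, m) = (1, 1) then
    -((lam + 2*(n:ℂ) - 1) * (lam + 2*(n:ℂ) + 1)) / (4*((n:ℂ) + 1)*(2*(n:ℂ) + 7))
  else if (l, m) = (2, 1) then
    -((lam + 2*(n:ℂ) + 1) * (lam + 2*(n:ℂ) + 3)) / (4*((n:ℂ) + 1)*(2*(n:ℂ) + 9))
  else
    -((lam + (l:ℂ) + 2*(n:ℂ) - 4) * (lam + (l:ℂ) + 2*(n:ℂ) + 2))
      / (4*((n:ℂ) + 1)*(2*(l:ℂ) + 2*(n:ℂ) + 3))

/-- The quasisolution r̃_n^{(l,m)}(λ). -/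
noncomputable def rq (l m : ℕ) (lam : ℂ) (n : ℕ) : ℂ :=
  if (l, m) = (1, 0) then
    lam^2/(8*(n:ℂ)^2 + 36*(n:ℂ) + 28) + lam*(2*(n:ℂ) + 3)/(2*(n:ℂ)^2 + 9*(n:ℂ) + 7)
      + (2*(n:ℂ) + 4)/(2*(n:ℂ) + 7)
  else if (l, m) = (1, 1) then
    lam^2/(8*(n:ℂ)^2 + 36*(n:ℂ) + 28) + lam*(2*(n:ℂ) + 3)/(2*(n:ℂ)^2 + 9*(n:ℂ) + 7)
      + (15*(n:ℂ) + 15)/(15*(n:ℂ) + 40)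
  else if (l, m) = (1, 2) then
    lam^2/(8*(n:ℂ)^2 + 28*(n:ℂ) + 20) + lam*(2*(n:ℂ) + 2)/(2*(n:ℂ)^2 + 7*(n:ℂ) + 5)
      + (2*(n:ℂ) + 12)/(2*(n:ℂ) + 14)
  else if (l, m) = (2, 1) then
    lam^2/(8*(n:ℂ)^2 + 44*(n:ℂ) + 36) + lam*(2*(n:ℂ) + 4)/(2*(n:ℂ)^2 + 11*(n:ℂ) + 9)
      + (2*(n:ℂ) + 9)/(2*(n:ℂ) + 12)
  else if (l, m) = (2, 2) then
    lam^2/(8*(n:ℂ)^2 + 36*(n:ℂ) + 28) + lam*(2*(n:ℂ) + 3)/(2*(n:ℂ)^2 + 9*(n:ℂ) + 7)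
      + (6*(n:ℂ) + 30)/(6*(n:ℂ) + 35)
  else if (l, m) = (2, 3) then
    lam^2/(8*(n:ℂ)^2 + 36*(n:ℂ) + 28) + lam*(2*(n:ℂ) + 3)/(2*(n:ℂ)^2 + 9*(n:ℂ) + 7)
      + (4*(n:ℂ) + 42)/(4*(n:ℂ) + 47)
  else if m + 1 = l then
    lam^2/(8*(l:ℂ)*(n:ℂ) + 8*(l:ℂ) + 8*(n:ℂ)^2 + 20*(n:ℂ) + 12)
      + lam*((l:ℂ) + 2*(n:ℂ) + 1)/(2*(l:ℂ)*(n:ℂ) + 2*(l:ℂ) + 2*(n:ℂ)^2 + 5*(n:ℂ) + 3)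
      + 3*((l:ℂ) - 3)/(8*(n:ℂ) + 8) + (6*(n:ℂ) + 11)/(6*(n:ℂ) + 20)
  else if m = l then
    lam^2/(8*(l:ℂ)*(n:ℂ) + 8*(l:ℂ) + 8*(n:ℂ)^2 + 20*(n:ℂ) + 12)
      + lam*((l:ℂ) + 2*(n:ℂ) + 1)/(2*(l:ℂ)*(n:ℂ) + 2*(l:ℂ) + 2*(n:ℂ)^2 + 5*(n:ℂ) + 3)
      + 3*((l:ℂ) - 2)/(8*(n:ℂ) + 8) + ((n:ℂ) + 4)/((n:ℂ) + 6)
  else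
    lam^2/(8*(l:ℂ)*(n:ℂ) + 8*(l:ℂ) + 8*(n:ℂ)^2 + 20*(n:ℂ) + 12)
      + lam*((l:ℂ) + 2*(n:ℂ) + 1)/(2*(l:ℂ)*(n:ℂ) + 2*(l:ℂ) + 2*(n:ℂ)^2 + 5*(n:ℂ) + 3)
      + 3*((l:ℂ) - 1)/(8*(n:ℂ) + 8) + (2*(n:ℂ) + 11)/(2*(n:ℂ) + 15)

/-- The ratio recurrence r₀ = A₀, r_n = A_n + B_n / r_{n−1}. -/
noncomputable def rseq (l m : ℕ) (lam : ℂ) : ℕ → ℂ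
  | 0 => Acoef l m lam 0
  | n + 1 => Acoef l m lam (n + 1) + Bcoef l m lam (n + 1) / rseq l m lam n

/-- The power series coefficient sequence: x₀ = 1, x₁ = A₀, x_{n+1} = A_n x_n + B_n x_{n−1}. -/
noncomputable def xseq (l m : ℕ) (lam : ℂ) : ℕ → ℂ
  | 0 => 1
  | 1 => Acoef l m lam 0
  | n + 2 => Acoef l m lam (n + 1) * xseq l m lam (n + 1) + Bcoef l m lam (n + 1) * xseq l m lam n


open Filter Topology
set_option maxHeartbeats 1000000

section RatioLimitAux


lemma inv_nat_C : Tendsto (fun n : ℕ => ((n:ℂ))⁻¹) atTop (𝓝 0) := by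
  have h1 : Tendsto (fun n : ℕ => ((n:ℝ))⁻¹) atTop (𝓝 0) :=
    tendsto_inv_atTop_zero.comp tendsto_natCast_atTop_atTop
  have h2 := (Complex.continuous_ofReal.tendsto 0).comp h1
  apply h2.congr
  intro n
  simp [Function.comp]

-- generic quadratic ratio limit
lemma rat_quad (p q r P Q R : ℂ) (hP : P ≠ 0) :
    Tendsto (fun n : ℕ => (p*(n:ℂ)^2 + q*(n:ℂ) + r)/(P*(n:ℂ)^2 + Q*(n:ℂ) + R)) atTop (𝓝 (p/P)) := by
  have key : ∀ᶠ n : ℕ in atTop,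
      (p*(n:ℂ)^2 + q*(n:ℂ) + r)/(P*(n:ℂ)^2 + Q*(n:ℂ) + R)
        = (p + q*(n:ℂ)⁻¹ + r*((n:ℂ)⁻¹)^2)/(P + Q*(n:ℂ)⁻¹ + R*((n:ℂ)⁻¹)^2) := by
    filter_upwards [eventually_ge_atTop 1] with n hn
    have hn0 : (n:ℂ) ≠ 0 := by
      exact_mod_cast Nat.cast_ne_zero.mpr (by omega)
    rw [show p*(n:ℂ)^2 + q*(n:ℂ) + r = (p + q*(n:ℂ)⁻¹ + r*((n:ℂ)⁻¹)^2) * (n:ℂ)^2 by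
      field_simp,
      show P*(n:ℂ)^2 + Q*(n:ℂ) + R = (P + Q*(n:ℂ)⁻¹ + R*((n:ℂ)⁻¹)^2) * (n:ℂ)^2 by
      field_simp,
      mul_div_mul_right _ _ (pow_ne_zero 2 hn0)]
  rw [tendsto_congr' key]
  have hnum : Tendsto (fun n : ℕ => p + q*(n:ℂ)⁻¹ + r*((n:ℂ)⁻¹)^2) atTop (𝓝 (p + q*0 + r*0^2)) := by
    exact (tendsto_const_nhds.add (tendsto_const_nhds.mul inv_nat_C)).add
      (tendsto_const_nhds.mul (inv_nat_C.pow 2))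
  have hden : Tendsto (fun n : ℕ => P + Q*(n:ℂ)⁻¹ + R*((n:ℂ)⁻¹)^2) atTop (𝓝 (P + Q*0 + R*0^2)) := by
    exact (tendsto_const_nhds.add (tendsto_const_nhds.mul inv_nat_C)).add
      (tendsto_const_nhds.mul (inv_nat_C.pow 2))
  have := hnum.div hden (by simpa using hP)
  simpa [Pi.div_def] using this
lemma Atend (l m : ℕ) (lam : ℂ) : Tendsto (Acoef l m lam) atTop (𝓝 (3/2)) := by
  have h32 : (3:ℂ)/2 = 12/8 := by norm_num
  rw [h32]
  by_cases h1 : (l,m) = ((1:ℕ),(0:ℕ))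
  · apply (rat_quad 12 (8*lam+32) (lam^2+12*lam+12) 8 36 28 (by norm_num)).congr
    intro n; simp only [Acoef, if_pos h1]; ring
  by_cases h2 : (l,m) = ((1:ℕ),(1:ℕ))
  · apply (rat_quad 12 (8*lam+28) (lam^2+12*lam+7) 8 36 28 (by norm_num)).congr
    intro n; simp only [Acoef, if_neg h1, if_pos h2]; ring
  by_cases h3 : (l,m) = ((2:ℕ),(1:ℕ))
  · apply (rat_quad 12 (8*lam+44) (lam^2+16*lam+27) 8 44 36 (by norm_num)).congr
    intro n; simp only [Acoef, if_neg h1, if_neg h2, if_pos h3]; ring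
  · apply (rat_quad 12 (12*(l:ℂ)+8*lam+8)
      (lam^2+4*lam+(l:ℂ)^2+4*(l:ℂ)*lam+2*(l:ℂ)+2*(m:ℂ)^2+2*(m:ℂ)-12)
      8 (8*(l:ℂ)+20) (8*(l:ℂ)+12) (by norm_num)).congr
    intro n; simp only [Acoef, if_neg h1, if_neg h2, if_neg h3]; ring

lemma Btend (l m : ℕ) (lam : ℂ) : Tendsto (Bcoef l m lam) atTop (𝓝 (-(1/2))) := by
  have h32 : -((1:ℂ)/2) = (-4)/8 := by norm_num
  rw [h32]
  by_cases h1 : (l,m) = ((1:ℕ),(0:ℕ))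
  · apply (rat_quad (-4) (-(4*lam+4)) (-(lam^2+2*lam)) 8 36 28 (by norm_num)).congr
    intro n; simp only [Bcoef, if_pos h1]; ring
  by_cases h2 : (l,m) = ((1:ℕ),(1:ℕ))
  · apply (rat_quad (-4) (-(4*lam)) (1-lam^2) 8 36 28 (by norm_num)).congr
    intro n; simp only [Bcoef, if_neg h1, if_pos h2]; ring
  by_cases h3 : (l,m) = ((2:ℕ),(1:ℕ))
  · apply (rat_quad (-4) (-(4*lam+8)) (-(lam^2+4*lam+3)) 8 44 36 (by norm_num)).congr
    intro n; simp only [Bcoef, if_neg h1, if_neg h2, if_pos h3]; ring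
  · apply (rat_quad (-4) (-(4*lam+4*(l:ℂ)-4)) (-((lam+(l:ℂ))^2-2*(lam+(l:ℂ))-8))
      8 (8*(l:ℂ)+20) (8*(l:ℂ)+12) (by norm_num)).congr
    intro n; simp only [Bcoef, if_neg h1, if_neg h2, if_neg h3]; ring


lemma estHi {A B U V : ℂ} {ε : ℝ} (ha : ‖A - 1‖ ≤ ε) (hb : ‖B‖ ≤ ε) :
    ‖A*U + B*V‖ ≤ (1+ε)*‖U‖ + ε*‖V‖ := by
  have hA : ‖A‖ ≤ 1 + ε := by
    have h := norm_add_le (A - 1) 1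
    simp only [sub_add_cancel, norm_one] at h
    linarith
  calc ‖A*U + B*V‖ ≤ ‖A*U‖ + ‖B*V‖ := norm_add_le _ _
    _ = ‖A‖*‖U‖ + ‖B‖*‖V‖ := by rw [norm_mul, norm_mul]
    _ ≤ (1+ε)*‖U‖ + ε*‖V‖ := by gcongr

lemma estLo {A B U V : ℂ} {ε : ℝ} (ha : ‖A - 1‖ ≤ ε) (hb : ‖B‖ ≤ ε) :
    (1-ε)*‖U‖ - ε*‖V‖ ≤ ‖A*U + B*V‖ := by
  have hA : 1 - ε ≤ ‖A‖ := by
    have h := norm_sub_norm_le (1:ℂ) (1 - A)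
    rw [norm_sub_rev] at h
    simp only [sub_sub_cancel, norm_one] at h
    linarith
  have h3 : ‖A*U‖ - ‖B*V‖ ≤ ‖A*U + B*V‖ := by
    have := norm_sub_norm_le (A*U) (-(B*V))
    simpa [sub_neg_eq_add] using this
  have h4 : (1-ε)*‖U‖ ≤ ‖A‖*‖U‖ := by
    rcases le_or_gt (1-ε) 0 with h | h
    · nlinarith [norm_nonneg A, norm_nonneg U]
    · gcongr
  have h5 : ‖B‖*‖V‖ ≤ ε*‖V‖ := by gcongr
  rw [norm_mul, norm_mul] at h3
  linarith

lemma estHi' {C D U V : ℂ} {ε : ℝ} (hc : ‖C‖ ≤ ε) (hd : ‖D - 1/2‖ ≤ ε) :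
    ‖C*U + D*V‖ ≤ ε*‖U‖ + (1/2+ε)*‖V‖ := by
  have hD : ‖D‖ ≤ 1/2 + ε := by
    have h := norm_add_le (D - 1/2) (1/2)
    simp only [sub_add_cancel] at h
    rw [show ‖(1/2 : ℂ)‖ = 1/2 by norm_num] at h
    linarith
  calc ‖C*U + D*V‖ ≤ ‖C*U‖ + ‖D*V‖ := norm_add_le _ _
    _ = ‖C‖*‖U‖ + ‖D‖*‖V‖ := by rw [norm_mul, norm_mul]
    _ ≤ ε*‖U‖ + (1/2+ε)*‖V‖ := by gcongr

lemma estLo' {C D U V : ℂ} {ε : ℝ} (hc : ‖C‖ ≤ ε) (hd : ‖D - 1/2‖ ≤ ε) :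
    (1/2-ε)*‖V‖ - ε*‖U‖ ≤ ‖C*U + D*V‖ := by
  have hD : 1/2 - ε ≤ ‖D‖ := by
    have h := norm_sub_norm_le ((1:ℂ)/2) ((1:ℂ)/2 - D)
    simp only [sub_sub_cancel] at h
    rw [norm_sub_rev] at h
    rw [show ‖(1/2 : ℂ)‖ = 1/2 by norm_num] at h
    linarith
  have h3 : ‖D*V‖ - ‖C*U‖ ≤ ‖C*U + D*V‖ := by
    have := norm_sub_norm_le (D*V) (-(C*U))
    simpa [sub_neg_eq_add, add_comm] using this
  have h4 : (1/2-ε)*‖V‖ ≤ ‖D‖*‖V‖ := by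
    rcases le_or_gt (1/2-ε) 0 with h | h
    · nlinarith [norm_nonneg D, norm_nonneg V]
    · gcongr
  have h5 : ‖C‖*‖U‖ ≤ ε*‖U‖ := by gcongr
  rw [norm_mul, norm_mul] at h3
  linarith
lemma dichotomy (a b c d u v : ℕ → ℂ)
    (ha : Tendsto a atTop (𝓝 1)) (hb : Tendsto b atTop (𝓝 0))
    (hc : Tendsto c atTop (𝓝 0)) (hd : Tendsto d atTop (𝓝 (1/2)))
    (hru : ∀ n, u (n+1) = a n * u n + b n * v n)
    (hrv : ∀ n, v (n+1) = c n * u n + d n * v n)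
    (hne : ∀ n, u n ≠ 0 ∨ v n ≠ 0) :
    ((∃ N, ∀ n, N ≤ n → u n ≠ 0) ∧ Tendsto (fun n => v n / u n) atTop (𝓝 0)) ∨
    ((∃ N, ∀ n, N ≤ n → v n ≠ 0) ∧ Tendsto (fun n => u n / v n) atTop (𝓝 0)) := by
  classical
  have key : ∀ ε : ℝ, 0 < ε → ∃ N : ℕ, ∀ n, N ≤ n →
      ‖a n - 1‖ ≤ ε ∧ ‖b n‖ ≤ ε ∧ ‖c n‖ ≤ ε ∧ ‖d n - 1/2‖ ≤ ε := by
    intro ε hε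
    obtain ⟨N1, h1⟩ := Metric.tendsto_atTop.mp ha ε hε
    obtain ⟨N2, h2⟩ := Metric.tendsto_atTop.mp hb ε hε
    obtain ⟨N3, h3⟩ := Metric.tendsto_atTop.mp hc ε hε
    obtain ⟨N4, h4⟩ := Metric.tendsto_atTop.mp hd ε hε
    refine ⟨max (max N1 N2) (max N3 N4), fun n hn => ?_⟩
    have e1 := h1 n (le_trans (le_trans (le_max_left _ _) (le_max_left _ _)) hn)
    have e2 := h2 n (le_trans (le_trans (le_max_right _ _) (le_max_left _ _)) hn)
    have e3 := h3 n (le_trans (le_trans (le_max_left _ _) (le_max_right _ _)) hn)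
    have e4 := h4 n (le_trans (le_trans (le_max_right _ _) (le_max_right _ _)) hn)
    rw [dist_eq_norm] at e1 e2 e3 e4
    simp only [sub_zero] at e2 e3
    exact ⟨e1.le, e2.le, e3.le, e4.le⟩
  obtain ⟨N₀, hN₀⟩ := key (1/16) (by norm_num)
  by_cases hcase : ∃ n₀, N₀ ≤ n₀ ∧ ‖v n₀‖ ≤ ‖u n₀‖
  · -- Case 1: limit is v/u → 0
    obtain ⟨n₀, hn₀, hvu₀⟩ := hcase
    left
    have inv : ∀ n, n₀ ≤ n → ‖v n‖ ≤ ‖u n‖ ∧ u n ≠ 0 := by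
      intro n hn
      induction n, hn using Nat.le_induction with
      | base =>
        refine ⟨hvu₀, ?_⟩
        rcases hne n₀ with h | h
        · exact h
        · intro h0
          rw [h0] at hvu₀
          simp only [norm_zero] at hvu₀
          exact h (norm_le_zero_iff.mp hvu₀)
      | succ n hn ih =>
        obtain ⟨hv, hu⟩ := ih
        have hg := hN₀ n (le_trans hn₀ hn)
        have h1 := estLo (U := u n) (V := v n) hg.1 hg.2.1
        have h2 := estHi' (U := u n) (V := v n) hg.2.2.1 hg.2.2.2
        rw [← hru n] at h1
        rw [← hrv n] at h2
        have hu' : 0 < ‖u n‖ := norm_pos_iff.mpr hu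
        constructor
        · linarith
        · have : (0:ℝ) < ‖u (n+1)‖ := by linarith
          exact norm_pos_iff.mp this
    have small : ∀ ε : ℝ, 0 < ε → ε ≤ 1/16 → ∃ N, ∀ n, N ≤ n → ‖v n‖ ≤ 8*ε*‖u n‖ := by
      intro ε hε hε16
      obtain ⟨N₁', hN₁'⟩ := key ε hε
      set N₁ := max N₁' n₀ with hN₁def
      have hgood : ∀ n, N₁ ≤ n → ‖a n - 1‖ ≤ ε ∧ ‖b n‖ ≤ ε ∧ ‖c n‖ ≤ ε ∧ ‖d n - 1/2‖ ≤ ε :=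
        fun n hn => hN₁' n (le_trans (le_max_left _ _) hn)
      have hinv : ∀ n, N₁ ≤ n → ‖v n‖ ≤ ‖u n‖ ∧ u n ≠ 0 :=
        fun n hn => inv n (le_trans (le_max_right _ _) hn)
      have pers : ∀ n, N₁ ≤ n → ‖v n‖ ≤ 8*ε*‖u n‖ → ‖v (n+1)‖ ≤ 8*ε*‖u (n+1)‖ := by
        intro n hn hsm
        have hg := hgood n hn
        have h1 := estLo (U := u n) (V := v n) hg.1 hg.2.1
        have h2 := estHi' (U := u n) (V := v n) hg.2.2.1 hg.2.2.2
        rw [← hru n] at h1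
        rw [← hrv n] at h2
        have hi := (hinv n hn).1
        have hun : (0:ℝ) ≤ ‖u n‖ := norm_nonneg _
        have hvn : (0:ℝ) ≤ ‖v n‖ := norm_nonneg _
        nlinarith [mul_le_mul_of_nonneg_left h1 (by positivity : (0:ℝ) ≤ 8*ε),
          mul_le_mul_of_nonneg_left hsm (by linarith : (0:ℝ) ≤ 1/2 + ε),
          mul_le_mul_of_nonneg_left hi (by positivity : (0:ℝ) ≤ 8*ε*ε)]
      have entry : ∃ n, N₁ ≤ n ∧ ‖v n‖ ≤ 8*ε*‖u n‖ := by
        by_contra hno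
        push_neg at hno
        have geo : ∀ k : ℕ, ‖v (N₁+k)‖ ≤ (11/16)^k * ‖v N₁‖ ∧ (7/8)^k * ‖u N₁‖ ≤ ‖u (N₁+k)‖ := by
          intro k
          induction k with
          | zero => simp
          | succ k ih =>
            obtain ⟨ihv, ihu⟩ := ih
            set n := N₁ + k with hndef
            have hnN : N₁ ≤ n := by omega
            have hg := hgood n hnN
            have h1 := estLo (U := u n) (V := v n) hg.1 hg.2.1
            have h2 := estHi' (U := u n) (V := v n) hg.2.2.1 hg.2.2.2
            rw [← hru n] at h1
            rw [← hrv n] at h2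
            have hbig := hno n hnN
            have hi := (hinv n hnN).1
            have hun : (0:ℝ) ≤ ‖u n‖ := norm_nonneg _
            have hvn : (0:ℝ) ≤ ‖v n‖ := norm_nonneg _
            have hvN : (0:ℝ) ≤ ‖v N₁‖ := norm_nonneg _
            have huN : (0:ℝ) ≤ ‖u N₁‖ := norm_nonneg _
            have hp1 : (0:ℝ) ≤ (11/16)^k := by positivity
            have hp2 : (0:ℝ) ≤ (7/8)^k := by positivity
            have step1 : ‖v (n+1)‖ ≤ (11/16) * ‖v n‖ := by
              -- ε‖u n‖ < ‖v n‖/8 since 8ε‖u n‖ < ‖v n‖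
              nlinarith
            have step2 : (7/8) * ‖u n‖ ≤ ‖u (n+1)‖ := by
              -- ε‖v n‖ ≤ (1/16)‖v n‖ ≤ (1/16)‖u n‖
              nlinarith [mul_le_mul_of_nonneg_right hε16 hvn]
            constructor
            · show ‖v (n+1)‖ ≤ (11/16)^(k+1) * ‖v N₁‖
              calc ‖v (n+1)‖ ≤ (11/16) * ‖v n‖ := step1
                _ ≤ (11/16) * ((11/16)^k * ‖v N₁‖) := by nlinarith
                _ = (11/16)^(k+1) * ‖v N₁‖ := by ring
            · show (7/8)^(k+1) * ‖u N₁‖ ≤ ‖u (n+1)‖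
              calc (7/8)^(k+1) * ‖u N₁‖ = (7/8) * ((7/8)^k * ‖u N₁‖) := by ring
                _ ≤ (7/8) * ‖u n‖ := by nlinarith
                _ ≤ ‖u (n+1)‖ := step2
        have huN : (0:ℝ) < ‖u N₁‖ := norm_pos_iff.mpr (hinv N₁ le_rfl).2
        have hvuN : ‖v N₁‖ ≤ ‖u N₁‖ := (hinv N₁ le_rfl).1
        have hlim : Tendsto (fun k : ℕ => ((11:ℝ)/14)^k) atTop (𝓝 0) := by
          apply tendsto_pow_atTop_nhds_zero_of_lt_one <;> norm_num
        obtain ⟨k, hk⟩ := (hlim.eventually_lt_const (by positivity : (0:ℝ) < 8*ε)).exists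
        have hbigk := hno (N₁+k) (by omega)
        obtain ⟨g1, g2⟩ := geo k
        -- 8ε(7/8)^k‖u N₁‖ ≤ 8ε‖u (N₁+k)‖ < ‖v (N₁+k)‖ ≤ (11/16)^k‖v N₁‖ ≤ (11/16)^k‖u N₁‖
        have hchain : 8*ε*((7/8)^k * ‖u N₁‖) < (11/16)^k * ‖u N₁‖ := by
          have e1 : 8*ε*((7/8)^k * ‖u N₁‖) ≤ 8*ε*‖u (N₁+k)‖ := by
            have : (0:ℝ) ≤ 8*ε := by positivity
            nlinarith
          have e2 : (11/16)^k * ‖v N₁‖ ≤ (11/16)^k * ‖u N₁‖ := by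
            have hp1 : (0:ℝ) ≤ (11/16)^k := by positivity
            nlinarith
          linarith
        have hfact : ((11:ℝ)/16)^k = (11/14)^k * (7/8)^k := by
          rw [← mul_pow]; norm_num
        rw [hfact] at hchain
        have hp2 : (0:ℝ) < (7/8)^k := by positivity
        have c1 : 8*ε*(7/8)^k < (11/14)^k * (7/8)^k := by
          have h' : (8*ε*(7/8)^k) * ‖u N₁‖ < ((11/14)^k * (7/8)^k) * ‖u N₁‖ := by
            ring_nf
            ring_nf at hchain
            linarith
          exact (mul_lt_mul_iff_of_pos_right huN).mp h'
        have c2 : 8*ε < (11/14)^k := (mul_lt_mul_iff_of_pos_right hp2).mp c1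
        linarith
      obtain ⟨n₂, hn₂, hent⟩ := entry
      refine ⟨n₂, fun n hn => ?_⟩
      induction n, hn using Nat.le_induction with
      | base => exact hent
      | succ n hn ih => exact pers n (le_trans hn₂ hn) ih
    refine ⟨⟨n₀, fun n hn => (inv n hn).2⟩, ?_⟩
    rw [NormedAddCommGroup.tendsto_nhds_zero]
    intro δ hδ
    have hε : (0:ℝ) < min (δ/9) (1/16) := by positivity
    obtain ⟨N, hN⟩ := small (min (δ/9) (1/16)) hε (min_le_right _ _)
    rw [eventually_atTop]
    refine ⟨max N n₀, fun n hn => ?_⟩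
    have h1 := hN n (le_trans (le_max_left _ _) hn)
    have hu : u n ≠ 0 := (inv n (le_trans (le_max_right _ _) hn)).2
    have hu' : (0:ℝ) < ‖u n‖ := norm_pos_iff.mpr hu
    rw [norm_div, div_lt_iff₀ hu']
    have : 8 * min (δ/9) (1/16) < δ := by
      have := min_le_left (δ/9) (1/16 : ℝ)
      linarith
    nlinarith
  · -- Case 2: limit is u/v → 0
    push_neg at hcase
    right
    have hvne : ∀ n, N₀ ≤ n → v n ≠ 0 := by
      intro n hn
      have := hcase n hn
      intro h0
      rw [h0] at this
      simp only [norm_zero] at this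
      exact absurd this (not_lt.mpr (norm_nonneg _))
    have small : ∀ ε : ℝ, 0 < ε → ε ≤ 1/16 → ∃ N, ∀ n, N ≤ n → ‖u n‖ ≤ 8*ε*‖v n‖ := by
      intro ε hε hε16
      obtain ⟨N₁', hN₁'⟩ := key ε hε
      set N₁ := max N₁' N₀ with hN₁def
      have hgood : ∀ n, N₁ ≤ n → ‖a n - 1‖ ≤ ε ∧ ‖b n‖ ≤ ε ∧ ‖c n‖ ≤ ε ∧ ‖d n - 1/2‖ ≤ ε :=
        fun n hn => hN₁' n (le_trans (le_max_left _ _) hn)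
      have hlt : ∀ n, N₁ ≤ n → ‖u n‖ < ‖v n‖ :=
        fun n hn => hcase n (le_trans (le_max_right _ _) hn)
      refine ⟨N₁, fun n hn => ?_⟩
      by_contra hbig
      push_neg at hbig
      have grow : ∀ k : ℕ, (13/10)^k * (8*ε) * ‖v (n+k)‖ ≤ ‖u (n+k)‖ := by
        intro k
        induction k with
        | zero => simpa using hbig.le
        | succ k ih =>
          set p := n + k with hpdef
          have hpN : N₁ ≤ p := by omega
          have hg := hgood p hpN
          have h1 := estLo (U := u p) (V := v p) hg.1 hg.2.1
          have h2 := estHi' (U := u p) (V := v p) hg.2.2.1 hg.2.2.2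
          rw [← hru p] at h1
          rw [← hrv p] at h2
          have hup : (0:ℝ) ≤ ‖u p‖ := norm_nonneg _
          have hvp : (0:ℝ) ≤ ‖v p‖ := norm_nonneg _
          have hlt' := hlt p hpN
          have hpow1 : (1:ℝ) ≤ (13/10)^k := one_le_pow₀ (by norm_num)
          have h8 : 8*ε*‖v p‖ ≤ ‖u p‖ := by nlinarith
          have step1 : (13/16) * ‖u p‖ ≤ ‖u (p+1)‖ := by nlinarith
          have step2 : ‖v (p+1)‖ ≤ (5/8) * ‖v p‖ := by nlinarith
          show (13/10)^(k+1) * (8*ε) * ‖v (p+1)‖ ≤ ‖u (p+1)‖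
          have hnn : (0:ℝ) ≤ (13/10)^(k+1) * (8*ε) := by positivity
          calc (13/10)^(k+1) * (8*ε) * ‖v (p+1)‖
              ≤ (13/10)^(k+1) * (8*ε) * ((5/8) * ‖v p‖) := by nlinarith
            _ = (13/16) * ((13/10)^k * (8*ε) * ‖v p‖) := by ring
            _ ≤ (13/16) * ‖u p‖ := by nlinarith
            _ ≤ ‖u (p+1)‖ := step1
      -- contradiction: (13/10)^k * 8ε < 1 for all k
      have hbound : ∀ k : ℕ, (13/10:ℝ)^k * (8*ε) < 1 := by
        intro k
        have h1 := grow k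
        have h2 := hlt (n+k) (by omega)
        have hv : (0:ℝ) < ‖v (n+k)‖ :=
          norm_pos_iff.mpr (hvne (n+k) (le_trans (le_trans (le_max_right N₁' N₀) hn) (Nat.le_add_right n k)))
        nlinarith
      have hlim : Tendsto (fun k : ℕ => ((13:ℝ)/10)^k) atTop atTop :=
        tendsto_pow_atTop_atTop_of_one_lt (by norm_num)
      obtain ⟨k, hk⟩ := (hlim.eventually_ge_atTop (1/(8*ε))).exists
      have := hbound k
      have h8ε : (0:ℝ) < 8*ε := by positivity
      rw [div_le_iff₀ h8ε] at hk
      linarith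
    refine ⟨⟨N₀, hvne⟩, ?_⟩
    rw [NormedAddCommGroup.tendsto_nhds_zero]
    intro δ hδ
    have hε : (0:ℝ) < min (δ/9) (1/16) := by positivity
    obtain ⟨N, hN⟩ := small (min (δ/9) (1/16)) hε (min_le_right _ _)
    rw [eventually_atTop]
    refine ⟨max N N₀, fun n hn => ?_⟩
    have h1 := hN n (le_trans (le_max_left _ _) hn)
    have hv : v n ≠ 0 := hvne n (le_trans (le_max_right _ _) hn)
    have hv' : (0:ℝ) < ‖v n‖ := norm_pos_iff.mpr hv
    rw [norm_div, div_lt_iff₀ hv']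
    have : 8 * min (δ/9) (1/16) < δ := by
      have := min_le_left (δ/9) (1/16 : ℝ)
      linarith
    nlinarith


lemma re_eq (lam : ℂ) (c : ℝ) (h : lam = (c:ℂ)) : lam.re = c := by rw [h]; simp

lemma Bzero (l m k : ℕ) (hl : 1 ≤ l) (hk : 1 ≤ k) (lam : ℂ) (hlam : 0 ≤ lam.re)
    (h : Bcoef l m lam k = 0) :
    (l,m) ≠ ((1:ℕ),(0:ℕ)) ∧ (l,m) ≠ (1,1) ∧ (l,m) ≠ (2,1) ∧ k = 1 ∧ l ≤ 2 ∧
      lam = 4 - (l:ℂ) - 2*(k:ℂ) := by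
  have hk' : (1:ℝ) ≤ (k:ℝ) := by exact_mod_cast hk
  have hl' : (1:ℝ) ≤ (l:ℝ) := by exact_mod_cast hl
  by_cases h1 : (l,m) = ((1:ℕ),(0:ℕ))
  · exfalso
    simp only [Bcoef, if_pos h1] at h
    rw [div_eq_zero_iff] at h
    rcases h with h | h
    · rw [neg_eq_zero, mul_eq_zero] at h
      rcases h with h | h
      · have h' : lam = ((-(2*k) : ℝ) : ℂ) := by push_cast; linear_combination h
        have := re_eq lam _ h'
        linarith
      · have h' : lam = ((-(2*k) - 2 : ℝ) : ℂ) := by push_cast; linear_combination h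
        have := re_eq lam _ h'
        linarith
    · have h' : ((4*(k+1)*(2*k+7) : ℕ) : ℂ) = 0 := by push_cast; linear_combination h
      rw [Nat.cast_eq_zero] at h'
      simp [Nat.mul_eq_zero] at h'
  by_cases h2 : (l,m) = ((1:ℕ),(1:ℕ))
  · exfalso
    simp only [Bcoef, if_neg h1, if_pos h2] at h
    rw [div_eq_zero_iff] at h
    rcases h with h | h
    · rw [neg_eq_zero, mul_eq_zero] at h
      rcases h with h | h
      · have h' : lam = ((1 - 2*k : ℝ) : ℂ) := by push_cast; linear_combination h
        have := re_eq lam _ h'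
        linarith
      · have h' : lam = ((-(2*k) - 1 : ℝ) : ℂ) := by push_cast; linear_combination h
        have := re_eq lam _ h'
        linarith
    · have h' : ((4*(k+1)*(2*k+7) : ℕ) : ℂ) = 0 := by push_cast; linear_combination h
      rw [Nat.cast_eq_zero] at h'
      simp [Nat.mul_eq_zero] at h'
  by_cases h3 : (l,m) = ((2:ℕ),(1:ℕ))
  · exfalso
    simp only [Bcoef, if_neg h1, if_neg h2, if_pos h3] at h
    rw [div_eq_zero_iff] at h
    rcases h with h | h
    · rw [neg_eq_zero, mul_eq_zero] at h
      rcases h with h | h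
      · have h' : lam = ((-(2*k) - 1 : ℝ) : ℂ) := by push_cast; linear_combination h
        have := re_eq lam _ h'
        linarith
      · have h' : lam = ((-(2*k) - 3 : ℝ) : ℂ) := by push_cast; linear_combination h
        have := re_eq lam _ h'
        linarith
    · have h' : ((4*(k+1)*(2*k+9) : ℕ) : ℂ) = 0 := by push_cast; linear_combination h
      rw [Nat.cast_eq_zero] at h'
      simp [Nat.mul_eq_zero] at h'
  · simp only [Bcoef, if_neg h1, if_neg h2, if_neg h3] at h
    rw [div_eq_zero_iff] at h
    rcases h with h | h
    · rw [neg_eq_zero, mul_eq_zero] at h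
      rcases h with h | h
      · have h' : lam = ((4 - l - 2*k : ℝ) : ℂ) := by push_cast; linear_combination h
        have hre := re_eq lam _ h'
        have hlk : (l:ℝ) + 2*(k:ℝ) ≤ 4 := by linarith
        have hlk' : l + 2*k ≤ 4 := by exact_mod_cast hlk
        exact ⟨h1, h2, h3, by omega, by omega, by push_cast; linear_combination h⟩
      · exfalso
        have h' : lam = ((-(l:ℝ) - 2*k - 2 : ℝ) : ℂ) := by push_cast; linear_combination h
        have := re_eq lam _ h'
        linarith
    · exfalso
      have h' : ((4*(k+1)*(2*l+2*k+3) : ℕ) : ℂ) = 0 := by push_cast; linear_combination h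
      rw [Nat.cast_eq_zero] at h'
      simp [Nat.mul_eq_zero] at h'

lemma xseq_not_ev_zero (l m : ℕ) (hl : 1 ≤ l) (hm : m + 1 = l ∨ m = l ∨ m = l + 1)
    (lam : ℂ) (hlam : 0 ≤ lam.re) : ∀ N, ∃ n, N ≤ n ∧ xseq l m lam n ≠ 0 := by
  by_contra hcon
  push_neg at hcon
  obtain ⟨N, hN⟩ := hcon
  have hex : ∃ M, ∀ n, M ≤ n → xseq l m lam n = 0 := ⟨N, hN⟩
  classical
  have hM : ∀ n, Nat.find hex ≤ n → xseq l m lam n = 0 := Nat.find_spec hex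
  set M := Nat.find hex with hMdef
  have hM1 : 1 ≤ M := by
    by_contra h0
    have hM0 : M = 0 := by omega
    have := hM 0 (by omega)
    rw [show xseq l m lam 0 = 1 from rfl] at this
    exact one_ne_zero this
  obtain ⟨K, hK⟩ : ∃ K, M = K + 1 := ⟨M - 1, by omega⟩
  have hprev : xseq l m lam K ≠ 0 := by
    intro h0
    have hall : ∀ n, K ≤ n → xseq l m lam n = 0 := by
      intro n hn
      rcases eq_or_lt_of_le hn with h | h
      · rw [← h]; exact h0
      · exact hM n (by omega)
    exact Nat.find_min hex (by omega : K < M) hall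
  have hB : Bcoef l m lam (K+1) = 0 := by
    have h2 : xseq l m lam (K+2) = 0 := hM _ (by omega)
    have h1 : xseq l m lam (K+1) = 0 := hM _ (by omega)
    rw [show xseq l m lam (K+2)
        = Acoef l m lam (K+1) * xseq l m lam (K+1) + Bcoef l m lam (K+1) * xseq l m lam K
        from rfl, h1, mul_zero, zero_add] at h2
    rcases mul_eq_zero.mp h2 with h | h
    · exact h
    · exact absurd h hprev
  obtain ⟨hg1, hg2, hg3, hk1, hl2, hlameq⟩ := Bzero l m (K+1) hl (by omega) lam hlam hB
  have hK0 : K = 0 := by omega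
  rw [hK0] at hlameq
  norm_num at hlameq
  have hx1 : xseq l m lam 1 = 0 := hM 1 (by omega)
  rw [show xseq l m lam 1 = Acoef l m lam 0 from rfl] at hx1
  rcases (show l = 1 ∨ l = 2 by omega) with rfl | rfl
  · -- l = 1
    have hm2 : m = 2 := by
      rcases hm with h | h | h
      · exact absurd (by rw [show m = 0 by omega]) hg1
      · exact absurd (by rw [h]) hg2
      · omega
    have hlam1 : lam = 1 := by rw [hlameq]; norm_num
    rw [hm2, hlam1] at hx1
    simp only [Acoef] at hx1
    norm_num at hx1
  · -- l = 2
    have hlam0 : lam = 0 := by rw [hlameq]; norm_num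
    rcases hm with h | h | h
    · have hm1 : m = 1 := by omega
      exact absurd (by rw [hm1]) hg3
    · have hm2 : m = 2 := by omega
      rw [hm2, hlam0] at hx1
      simp only [Acoef] at hx1
      norm_num at hx1
    · have hm3 : m = 3 := by omega
      rw [hm3, hlam0] at hx1
      simp only [Acoef] at hx1
      norm_num at hx1

end RatioLimitAux

/-- Poincaré's theorem applied to the Heun power-series coefficients: the ratio
x_{n+1}/x_n converges, with limit 1/2 or 1 (and x_n is eventually nonzero). -/
theorem ratio_limit_exists (l m : ℕ) (hl : 1 ≤ l)
    (hm : m + 1 = l ∨ m = l ∨ m = l + 1)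
    (lam : ℂ) (hlam : 0 ≤ lam.re) :
    ∃ N : ℕ, (∀ n : ℕ, N ≤ n → xseq l m lam n ≠ 0) ∧
      ∃ L : ℂ, (L = 1/2 ∨ L = 1) ∧
        Filter.Tendsto (fun n : ℕ => xseq l m lam (n + 1) / xseq l m lam n)
          Filter.atTop (nhds L) := by
  classical
  have hrec : ∀ n, xseq l m lam (n+2)
      = Acoef l m lam (n+1) * xseq l m lam (n+1) + Bcoef l m lam (n+1) * xseq l m lam n :=
    fun n => rfl
  have hA1 : Tendsto (fun n => Acoef l m lam (n+1)) atTop (𝓝 (3/2)) :=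
    (Atend l m lam).comp (tendsto_add_atTop_nat 1)
  have hB1 : Tendsto (fun n => Bcoef l m lam (n+1)) atTop (𝓝 (-(1/2))) :=
    (Btend l m lam).comp (tendsto_add_atTop_nat 1)
  have ha : Tendsto (fun n => 2*Acoef l m lam (n+1) - 1 + 2*Bcoef l m lam (n+1)) atTop (𝓝 1) := by
    have h := ((hA1.const_mul 2).sub (tendsto_const_nhds (x := (1:ℂ)))).add (hB1.const_mul 2)
    have : (2*(3/2) - 1 + 2*(-(1/2)) : ℂ) = 1 := by norm_num
    rw [this] at h
    exact h
  have hb : Tendsto (fun n => 1/2 - Acoef l m lam (n+1) - 2*Bcoef l m lam (n+1)) atTop (𝓝 0) := by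
    have h := ((tendsto_const_nhds (x := (1/2:ℂ))).sub hA1).sub (hB1.const_mul 2)
    have : (1/2 - 3/2 - 2*(-(1/2)) : ℂ) = 0 := by norm_num
    rw [this] at h
    exact h
  have hcc : Tendsto (fun n => 2*Acoef l m lam (n+1) - 2 + 2*Bcoef l m lam (n+1)) atTop (𝓝 0) := by
    have h := ((hA1.const_mul 2).sub (tendsto_const_nhds (x := (2:ℂ)))).add (hB1.const_mul 2)
    have : (2*(3/2) - 2 + 2*(-(1/2)) : ℂ) = 0 := by norm_num
    rw [this] at h
    exact h
  have hdd : Tendsto (fun n => 1 - Acoef l m lam (n+1) - 2*Bcoef l m lam (n+1)) atTop (𝓝 (1/2)) := by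
    have h := ((tendsto_const_nhds (x := (1:ℂ))).sub hA1).sub (hB1.const_mul 2)
    have : (1 - 3/2 - 2*(-(1/2)) : ℂ) = 1/2 := by norm_num
    rw [this] at h
    exact h
  have hru : ∀ n, (xseq l m lam (n+1+1) - xseq l m lam (n+1) / 2)
      = (2*Acoef l m lam (n+1) - 1 + 2*Bcoef l m lam (n+1)) * (xseq l m lam (n+1) - xseq l m lam n / 2)
        + (1/2 - Acoef l m lam (n+1) - 2*Bcoef l m lam (n+1)) * (xseq l m lam (n+1) - xseq l m lam n) := by
    intro n
    rw [hrec n]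
    ring
  have hrv : ∀ n, (xseq l m lam (n+1+1) - xseq l m lam (n+1))
      = (2*Acoef l m lam (n+1) - 2 + 2*Bcoef l m lam (n+1)) * (xseq l m lam (n+1) - xseq l m lam n / 2)
        + (1 - Acoef l m lam (n+1) - 2*Bcoef l m lam (n+1)) * (xseq l m lam (n+1) - xseq l m lam n) := by
    intro n
    rw [hrec n]
    ring
  have hnz := xseq_not_ev_zero l m hl hm lam hlam
  have hne : ∀ n, (xseq l m lam (n+1) - xseq l m lam n / 2) ≠ 0
      ∨ (xseq l m lam (n+1) - xseq l m lam n) ≠ 0 := by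
    intro n
    by_contra hcon
    push_neg at hcon
    obtain ⟨h1, h2⟩ := hcon
    have hxn : xseq l m lam n = 0 := by
      have h3 : xseq l m lam n / 2 - xseq l m lam n = 0 := by linear_combination h2 - h1
      have : xseq l m lam n * (-(1/2)) = 0 := by linear_combination h3
      rcases mul_eq_zero.mp this with h | h
      · exact h
      · norm_num at h
    have hxn1 : xseq l m lam (n+1) = 0 := by
      have := h2
      rw [hxn, sub_zero] at this
      exact this
    have hzero : ∀ k, xseq l m lam (n+k) = 0 ∧ xseq l m lam (n+k+1) = 0 := by
      intro k
      induction k with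
      | zero => exact ⟨hxn, hxn1⟩
      | succ k ih =>
        refine ⟨ih.2, ?_⟩
        have hr := hrec (n+k)
        rw [ih.1, ih.2, mul_zero, mul_zero, add_zero] at hr
        exact hr
    obtain ⟨n', hn', hxne⟩ := hnz n
    obtain ⟨k, rfl⟩ : ∃ k, n' = n + k := ⟨n' - n, by omega⟩
    exact hxne (hzero k).1
  rcases dichotomy _ _ _ _
      (fun n => xseq l m lam (n+1) - xseq l m lam n / 2)
      (fun n => xseq l m lam (n+1) - xseq l m lam n)
      ha hb hcc hdd hru hrv hne with ⟨⟨N, hN⟩, hlim⟩ | ⟨⟨N, hN⟩, hlim⟩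
  · -- v/u → 0 : limit 1
    have hev : ∀ᶠ n in atTop,
        ‖(xseq l m lam (n+1) - xseq l m lam n) / (xseq l m lam (n+1) - xseq l m lam n / 2)‖ < 1/2 := by
      rw [NormedAddCommGroup.tendsto_nhds_zero] at hlim
      exact hlim _ (by norm_num)
    rw [eventually_atTop] at hev
    obtain ⟨N₂, hN₂⟩ := hev
    have hvu : ∀ n, max N N₂ ≤ n → ‖xseq l m lam (n+1) - xseq l m lam n‖
        < ‖xseq l m lam (n+1) - xseq l m lam n / 2‖ := by
      intro n hn
      have hu0 := hN n (le_trans (le_max_left _ _) hn)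
      have hsm := hN₂ n (le_trans (le_max_right _ _) hn)
      have hupos : (0:ℝ) < ‖xseq l m lam (n+1) - xseq l m lam n / 2‖ := norm_pos_iff.mpr hu0
      rw [norm_div, div_lt_iff₀ hupos] at hsm
      nlinarith [norm_nonneg (xseq l m lam (n+1) - xseq l m lam n)]
    have hxne : ∀ n, max N N₂ ≤ n → xseq l m lam n ≠ 0 := by
      intro n hn
      have h := hvu n hn
      intro h0
      rw [h0] at h
      simp only [sub_zero, zero_div, sub_zero] at h
      exact lt_irrefl _ h
    refine ⟨max N N₂, hxne, 1, Or.inr rfl, ?_⟩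
    have hmain : Tendsto (fun n =>
        (2 - (xseq l m lam (n+1) - xseq l m lam n) / (xseq l m lam (n+1) - xseq l m lam n / 2))
        / (2 - 2*((xseq l m lam (n+1) - xseq l m lam n) / (xseq l m lam (n+1) - xseq l m lam n / 2))))
        atTop (𝓝 1) := by
      have h1 := (tendsto_const_nhds (x := (2:ℂ))).sub hlim
      have h2 := (tendsto_const_nhds (x := (2:ℂ))).sub (hlim.const_mul 2)
      rw [sub_zero] at h1
      rw [mul_zero, sub_zero] at h2
      have h3 := h1.div h2 two_ne_zero
      have : ((2:ℂ)/2) = 1 := by norm_num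
      rw [this] at h3
      exact h3
    apply hmain.congr'
    rw [EventuallyEq, eventually_atTop]
    refine ⟨max N N₂, fun n hn => ?_⟩
    have hu0 := hN n (le_trans (le_max_left _ _) hn)
    set U := xseq l m lam (n+1) - xseq l m lam n / 2 with hU
    set V := xseq l m lam (n+1) - xseq l m lam n with hV
    have e1 : xseq l m lam (n+1) = (2 - V/U) * U := by
      field_simp
      rw [hU, hV]
      ring
    have e2 : xseq l m lam n = (2 - 2*(V/U)) * U := by
      field_simp
      rw [hU, hV]
      ring
    rw [e1, e2, mul_div_mul_right _ _ hu0]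
  · -- u/v → 0 : limit 1/2
    have hev : ∀ᶠ n in atTop,
        ‖(xseq l m lam (n+1) - xseq l m lam n / 2) / (xseq l m lam (n+1) - xseq l m lam n)‖ < 1/2 := by
      rw [NormedAddCommGroup.tendsto_nhds_zero] at hlim
      exact hlim _ (by norm_num)
    rw [eventually_atTop] at hev
    obtain ⟨N₂, hN₂⟩ := hev
    have hvu : ∀ n, max N N₂ ≤ n → ‖xseq l m lam (n+1) - xseq l m lam n / 2‖
        < ‖xseq l m lam (n+1) - xseq l m lam n‖ := by
      intro n hn
      have hv0 := hN n (le_trans (le_max_left _ _) hn)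
      have hsm := hN₂ n (le_trans (le_max_right _ _) hn)
      have hvpos : (0:ℝ) < ‖xseq l m lam (n+1) - xseq l m lam n‖ := norm_pos_iff.mpr hv0
      rw [norm_div, div_lt_iff₀ hvpos] at hsm
      nlinarith [norm_nonneg (xseq l m lam (n+1) - xseq l m lam n / 2)]
    have hxne : ∀ n, max N N₂ ≤ n → xseq l m lam n ≠ 0 := by
      intro n hn
      have h := hvu n hn
      intro h0
      rw [h0] at h
      simp only [sub_zero, zero_div, sub_zero] at h
      exact lt_irrefl _ h
    refine ⟨max N N₂, hxne, 1/2, Or.inl rfl, ?_⟩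
    have hmain : Tendsto (fun n =>
        (2*((xseq l m lam (n+1) - xseq l m lam n / 2) / (xseq l m lam (n+1) - xseq l m lam n)) - 1)
        / (2*((xseq l m lam (n+1) - xseq l m lam n / 2) / (xseq l m lam (n+1) - xseq l m lam n)) - 2))
        atTop (𝓝 (1/2)) := by
      have h1 := (hlim.const_mul 2).sub (tendsto_const_nhds (x := (1:ℂ)))
      have h2 := (hlim.const_mul 2).sub (tendsto_const_nhds (x := (2:ℂ)))
      rw [mul_zero, zero_sub] at h1 h2
      have h3 := h1.div h2 (by norm_num : (-2:ℂ) ≠ 0)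
      have : ((-1:ℂ)/(-2)) = 1/2 := by norm_num
      rw [this] at h3
      exact h3
    apply hmain.congr'
    rw [EventuallyEq, eventually_atTop]
    refine ⟨max N N₂, fun n hn => ?_⟩
    have hv0 := hN n (le_trans (le_max_left _ _) hn)
    set U := xseq l m lam (n+1) - xseq l m lam n / 2 with hU
    set V := xseq l m lam (n+1) - xseq l m lam n with hV
    have e1 : xseq l m lam (n+1) = (2*(U/V) - 1) * V := by
      field_simp
      rw [hU, hV]
      ring
    have e2 : xseq l m lam n = (2*(U/V) - 2) * V := by
      field_simp
      rw [hU, hV]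
      ring
    rw [e1, e2, mul_div_mul_right _ _ hv0]
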